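/- arXiv:2204.05033 — 2 statements merged into one kernel-verified Lean document; each statement's English description precedes it below -/
import Mathlib

section
/- Let Z_1, Z_2, ... be i.i.d. uniform on A^k and let E ⊆ P(A^k) be any set of distributions with minimum divergence D* = min_{W ∈ E ∩ P_ℓ} D(W‖U_k) attained among ℓ-types. Then for any δ > 0, the conditional probability that the empirical type P̂_{Z_1^ℓ} satisfies D(P̂_{Z_1^ℓ}‖U_k) > D_0 + 2δ, given P̂_{Z_1^ℓ} ∈ E, is at most (ℓ+1)^{2m^k} e^{−ℓδ}, provided there exists an ℓ-type W_0 ∈ E with D(W_0‖U_k) ≤ D_0 + δ. -/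
open scoped Classical BigOperators

/-- The empirical PMF on `B` of a string `z ∈ B^ℓ`. -/
noncomputable def empPMF {B : Type*} [Fintype B] (ℓ : ℕ) (z : Fin ℓ → B) (w : B) : ℝ :=
  ((Finset.univ.filter (fun t : Fin ℓ => z t = w)).card : ℝ) / ℓ

/-- Relative entropy (natural log), finite-sum form. -/
noncomputable def relEnt {B : Type*} [Fintype B] (P Q : B → ℝ) : ℝ :=
  ∑ b, P b * Real.log (P b / Q b)

/-!
Method of types. Write `T(c)` for the strings of length `ℓ` whose letter counts are `c`, and `M`
for the size of the alphabet. Every string of `T(c)` has mass `∏ (c_b/ℓ)^{c_b}` under the product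
measure `(c/ℓ)^ℓ`, and `M^ℓ ∏ (c_b/ℓ)^{c_b} = e^{ℓ D(c/ℓ‖U)}`. Since `T(c)` carries at most the
whole mass, `|T(c)| ≤ M^ℓ e^{-ℓD}`. Conversely, `|T(c)| ∏ c_b! = ℓ!` together with
`b! b^a ≤ a! b^b` shows that `T(c)` carries the largest mass among the at most `(ℓ+1)^M` type
classes, so `M^ℓ e^{-ℓD} ≤ (ℓ+1)^M |T(c)|`. The numerator is covered by at most `(ℓ+1)^M` type
classes of divergence `> D₀ + 2δ`, and the denominator contains the type class of `W₀`, of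
divergence `≤ D₀ + δ`.
-/

open Finset
open scoped Nat

theorem Nat.factorial_mul_pow_le_factorial_mul_pow (a b : ℕ) : b ! * b ^ a ≤ a ! * b ^ b := by
  rcases le_total a b with hab | hba
  · obtain ⟨d, rfl⟩ := Nat.exists_eq_add_of_le hab
    calc (a + d)! * (a + d) ^ a
        = a ! * (a + d).descFactorial d * (a + d) ^ a := by
          rw [← Nat.factorial_mul_descFactorial (Nat.le_add_left d a), Nat.add_sub_cancel]
      _ ≤ a ! * (a + d) ^ d * (a + d) ^ a := by gcongr; exact Nat.descFactorial_le_pow _ _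
      _ = a ! * (a + d) ^ (a + d) := by ring
  · obtain ⟨d, rfl⟩ := Nat.exists_eq_add_of_le hba
    calc b ! * b ^ (b + d) = b ! * b ^ d * b ^ b := by ring
      _ ≤ b ! * (b + 1) ^ d * b ^ b := by gcongr; omega
      _ ≤ (b + d)! * b ^ b := by gcongr; exact Nat.factorial_mul_pow_le_factorial

namespace MethodOfTypes

variable {B : Type*} {ℓ : ℕ}

noncomputable def counts (z : Fin ℓ → B) (b : B) : ℕ := #{t | z t = b}

lemma empPMF_eq [Fintype B] (z : Fin ℓ → B) : empPMF ℓ z = fun b => (counts z b : ℝ) / ℓ :=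
  rfl

lemma counts_le (z : Fin ℓ → B) (b : B) : counts z b ≤ ℓ := by
  unfold counts
  simpa using card_filter_le univ (z · = b)

lemma sum_counts [Fintype B] (z : Fin ℓ → B) : ∑ b, counts z b = ℓ := by
  unfold counts
  simpa using (card_eq_sum_card_fiberwise (s := univ) fun t _ => mem_univ (z t)).symm

lemma sum_div_eq_one [Fintype B] {c : B → ℕ} (hc : ∑ b, c b = ℓ) (hℓ : ℓ ≠ 0) :
    ∑ b, (c b : ℝ) / ℓ = 1 := by
  rw [← sum_div, ← Nat.cast_sum, hc, div_self (Nat.cast_ne_zero.mpr hℓ)]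

lemma card_subtype_eq_counts (z : Fin ℓ → B) (b : B) :
    Fintype.card {t // z t = b} = counts z b :=
  Fintype.card_subtype _

lemma prod_comp_eq_prod_pow_counts [Fintype B] {M : Type*} [CommMonoid M] (z : Fin ℓ → B)
    (g : B → M) : ∏ t, g (z t) = ∏ b, g b ^ counts z b := by
  rw [← prod_fiberwise_of_maps_to (fun t _ => mem_univ (z t))]
  refine prod_congr rfl fun b _ => ?_
  rw [counts, ← prod_const]
  exact prod_congr rfl fun t ht => by rw [(mem_filter.mp ht).2]

lemma counts_comp_perm (z : Fin ℓ → B) (σ : Equiv.Perm (Fin ℓ)) :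
    counts (z ∘ σ) = counts z := by
  funext b
  simp only [← card_subtype_eq_counts]
  exact Fintype.card_congr (σ.subtypeEquiv fun t => Iff.rfl)

lemma exists_comp_perm_eq_of_counts_eq [Fintype B] {z z' : Fin ℓ → B}
    (h : counts z = counts z') : ∃ σ : Equiv.Perm (Fin ℓ), z ∘ σ = z' := by
  have e : ∀ b, {t // z' t = b} ≃ {t // z t = b} := fun b =>
    Fintype.equivOfCardEq (by rw [card_subtype_eq_counts, card_subtype_eq_counts, h])
  refine ⟨(Equiv.sigmaFiberEquiv z').symm.trans
      ((Equiv.sigmaCongrRight e).trans (Equiv.sigmaFiberEquiv z)), funext fun t => ?_⟩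
  exact (e (z' t) ⟨t, rfl⟩).2

lemma exists_counts_eq [Fintype B] (c : B → ℕ) (hc : ∑ b, c b = ℓ) :
    ∃ z : Fin ℓ → B, counts z = c := by
  obtain ⟨e⟩ : Nonempty ((Σ b, Fin (c b)) ≃ Fin ℓ) :=
    Fintype.card_eq.mp (by simp [Fintype.card_sigma, hc])
  refine ⟨fun t => (e.symm t).1, funext fun b => ?_⟩
  rw [← card_subtype_eq_counts,
    Fintype.card_congr (e.symm.subtypeEquiv (q := (·.1 = b)) fun _ => Iff.rfl),
    Fintype.card_congr (Equiv.sigmaSubtype b), Fintype.card_fin]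

variable [Fintype B]

noncomputable def typeClass (ℓ : ℕ) (c : B → ℕ) : Finset (Fin ℓ → B) := {z | counts z = c}

lemma mem_typeClass {c : B → ℕ} {z : Fin ℓ → B} : z ∈ typeClass ℓ c ↔ counts z = c := by
  simp [typeClass]

lemma orbit_eq_typeClass (z₀ : Fin ℓ → B) :
    MulAction.orbit (Equiv.Perm (Fin ℓ))ᵈᵐᵃ z₀ = typeClass ℓ (counts z₀) := by
  ext z
  simp only [MulAction.mem_orbit_iff, mem_coe, mem_typeClass]
  constructor
  · rintro ⟨σ, rfl⟩
    exact counts_comp_perm z₀ (DomMulAct.mk.symm σ)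
  · intro h
    obtain ⟨σ, rfl⟩ := exists_comp_perm_eq_of_counts_eq h.symm
    exact ⟨DomMulAct.mk σ, rfl⟩

lemma card_typeClass_mul_prod_factorial {c : B → ℕ} (hc : ∑ b, c b = ℓ) :
    #(typeClass ℓ c) * ∏ b, (c b)! = ℓ ! := by
  obtain ⟨z₀, rfl⟩ := exists_counts_eq c hc
  have hstab : Nat.card (MulAction.stabilizer (Equiv.Perm (Fin ℓ))ᵈᵐᵃ z₀)
      = ∏ b, (counts z₀ b)! := by
    rw [Nat.card_congr MulOpposite.opEquiv,
      Nat.card_congr (DomMulAct.stabilizerMulEquiv z₀).toEquiv, Nat.card_pi]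
    refine prod_congr rfl fun b _ => ?_
    rw [Nat.card_perm, Nat.card_eq_fintype_card, card_subtype_eq_counts]
  rw [← hstab, ← Set.ncard_coe_finset, ← orbit_eq_typeClass, ← MulAction.index_stabilizer,
    mul_comm, Subgroup.card_mul_index, Nat.card_congr DomMulAct.mk.symm, Nat.card_perm,
    Nat.card_fin]

lemma card_image_counts_le (s : Finset (Fin ℓ → B)) :
    #(s.image counts) ≤ (ℓ + 1) ^ Fintype.card B :=
  calc #(s.image counts) ≤ #(Fintype.piFinset fun _ : B => range (ℓ + 1)) :=
        card_le_card fun c hc => by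
          obtain ⟨z, -, rfl⟩ := mem_image.mp hc
          simpa [Fintype.mem_piFinset, Nat.lt_succ_iff] using counts_le z
    _ = _ := by simp

lemma sum_prod_comp_eq_one {P : B → ℝ} (hP : ∑ b, P b = 1) :
    ∑ z : Fin ℓ → B, ∏ t, P (z t) = 1 := by
  rw [← Fintype.prod_sum (fun _ => P)]
  simp [hP]

lemma card_typeClass_mul_prod_pow_le_one {P : B → ℝ} (hP0 : ∀ b, 0 ≤ P b)
    (hP1 : ∑ b, P b = 1) (c : B → ℕ) : #(typeClass ℓ c) * ∏ b, P b ^ c b ≤ (1 : ℝ) :=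
  calc #(typeClass ℓ c) * ∏ b, P b ^ c b = ∑ z ∈ typeClass ℓ c, ∏ t, P (z t) := by
        rw [sum_congr rfl fun z hz => by rw [prod_comp_eq_prod_pow_counts, mem_typeClass.mp hz],
          sum_const, nsmul_eq_mul]
    _ ≤ ∑ z : Fin ℓ → B, ∏ t, P (z t) :=
        sum_le_sum_of_subset_of_nonneg (subset_univ _) fun z _ _ => prod_nonneg fun t _ => hP0 _
    _ = 1 := sum_prod_comp_eq_one hP1

lemma card_typeClass_mul_prod_pow_le_self {c c' : B → ℕ} (hc : ∑ b, c b = ℓ)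
    (hc' : ∑ b, c' b = ℓ) :
    #(typeClass ℓ c') * ∏ b, ((c b : ℝ) / ℓ) ^ c' b
      ≤ #(typeClass ℓ c) * ∏ b, ((c b : ℝ) / ℓ) ^ c b := by
  have key : #(typeClass ℓ c') * ∏ b, c b ^ c' b ≤ #(typeClass ℓ c) * ∏ b, c b ^ c b := by
    refine Nat.le_of_mul_le_mul_right (c := (∏ b, (c b)!) * ∏ b, (c' b)!) ?_ (by positivity)
    calc #(typeClass ℓ c') * (∏ b, c b ^ c' b) * ((∏ b, (c b)!) * ∏ b, (c' b)!)
        = (#(typeClass ℓ c') * ∏ b, (c' b)!) * ∏ b, ((c b)! * c b ^ c' b) := by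
          rw [prod_mul_distrib]; ring
      _ ≤ (#(typeClass ℓ c) * ∏ b, (c b)!) * ∏ b, ((c' b)! * c b ^ c b) := by
          rw [card_typeClass_mul_prod_factorial hc, card_typeClass_mul_prod_factorial hc']
          exact Nat.mul_le_mul_left _
            (prod_le_prod' fun b _ => Nat.factorial_mul_pow_le_factorial_mul_pow _ _)
      _ = #(typeClass ℓ c) * (∏ b, c b ^ c b) * ((∏ b, (c b)!) * ∏ b, (c' b)!) := by
          rw [prod_mul_distrib]; ring
  have hdiv : ∀ c'' : B → ℕ, ∑ b, c'' b = ℓ →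
      ∏ b, ((c b : ℝ) / ℓ) ^ c'' b = (∏ b, (c b : ℝ) ^ c'' b) / (ℓ : ℝ) ^ ℓ := by
    intro c'' hc''
    simp_rw [div_pow, prod_div_distrib, prod_pow_eq_pow_sum, hc'']
  rw [hdiv c' hc', hdiv c hc, mul_div_assoc', mul_div_assoc']
  exact div_le_div_of_nonneg_right (by exact_mod_cast key) (by positivity)

lemma one_le_card_typeClass_mul_prod_pow {c : B → ℕ} (hc : ∑ b, c b = ℓ) (hℓ : ℓ ≠ 0) :
    1 ≤ (ℓ + 1 : ℝ) ^ Fintype.card B * (#(typeClass ℓ c) * ∏ b, ((c b : ℝ) / ℓ) ^ c b) := by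
  set P : B → ℝ := fun b => (c b : ℝ) / ℓ
  calc (1 : ℝ) = ∑ z : Fin ℓ → B, ∏ t, P (z t) := (sum_prod_comp_eq_one (sum_div_eq_one hc hℓ)).symm
    _ = ∑ c' ∈ univ.image counts, #(typeClass ℓ c') * ∏ b, P b ^ c' b := by
        rw [← sum_fiberwise_of_maps_to (g := counts) fun z _ => mem_image_of_mem _ (mem_univ z)]
        refine sum_congr rfl fun c' _ => ?_
        rw [sum_congr rfl fun z hz => by rw [prod_comp_eq_prod_pow_counts, (mem_filter.mp hz).2],
          sum_const, nsmul_eq_mul]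
        rfl
    _ ≤ ∑ _c' ∈ univ.image counts, #(typeClass ℓ c) * ∏ b, P b ^ c b :=
        sum_le_sum fun c' hc' => by
          obtain ⟨z, -, rfl⟩ := mem_image.mp hc'
          exact card_typeClass_mul_prod_pow_le_self hc (sum_counts z)
    _ ≤ _ := by
        rw [sum_const, nsmul_eq_mul]
        gcongr
        exact_mod_cast card_image_counts_le univ

lemma exp_mul_relEnt_eq_prod_pow (c : B → ℕ) (hℓ : ℓ ≠ 0) {Q : B → ℝ} (hQ : ∀ b, 0 < Q b) :
    Real.exp (ℓ * relEnt (fun b => (c b : ℝ) / ℓ) Q) = ∏ b, ((c b : ℝ) / ℓ / Q b) ^ c b := by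
  rw [relEnt, mul_sum, Real.exp_sum]
  refine prod_congr rfl fun b _ => ?_
  rcases Nat.eq_zero_or_pos (c b) with hb | hb
  · simp [hb]
  · have hpos : 0 < (c b : ℝ) / ℓ / Q b := by have := hQ b; positivity
    rw [← mul_assoc, mul_div_cancel₀ _ (Nat.cast_ne_zero.mpr hℓ), Real.exp_nat_mul,
      Real.exp_log hpos]

variable [Nonempty B] {c : B → ℕ} {U : B → ℝ}

lemma card_pow_mul_prod_pow_eq_exp_relEnt (hc : ∑ b, c b = ℓ) (hℓ : ℓ ≠ 0)
    (hU : ∀ b, U b = (Fintype.card B : ℝ)⁻¹) :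
    (Fintype.card B : ℝ) ^ ℓ * ∏ b, ((c b : ℝ) / ℓ) ^ c b
      = Real.exp (ℓ * relEnt (fun b => (c b : ℝ) / ℓ) U) := by
  rw [exp_mul_relEnt_eq_prod_pow c hℓ fun b => by rw [hU]; positivity]
  simp_rw [hU, div_inv_eq_mul, mul_pow, prod_mul_distrib, prod_pow_eq_pow_sum, hc, mul_comm]

lemma card_typeClass_le (hc : ∑ b, c b = ℓ) (hℓ : ℓ ≠ 0)
    (hU : ∀ b, U b = (Fintype.card B : ℝ)⁻¹) :
    (#(typeClass ℓ c) : ℝ)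
      ≤ Fintype.card B ^ ℓ * Real.exp (-(ℓ * relEnt (fun b => (c b : ℝ) / ℓ) U)) := by
  have h := card_typeClass_mul_prod_pow_le_one (ℓ := ℓ) (fun b => by positivity)
    (sum_div_eq_one hc hℓ) c
  rw [Real.exp_neg, ← div_eq_mul_inv, le_div_iff₀ (Real.exp_pos _),
    ← card_pow_mul_prod_pow_eq_exp_relEnt hc hℓ hU]
  calc _ = (Fintype.card B : ℝ) ^ ℓ * (#(typeClass ℓ c) * ∏ b, ((c b : ℝ) / ℓ) ^ c b) := by
        ring
    _ ≤ (Fintype.card B : ℝ) ^ ℓ * 1 := by gcongr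
    _ = _ := mul_one _

lemma card_pow_mul_exp_neg_relEnt_le_card_typeClass (hc : ∑ b, c b = ℓ) (hℓ : ℓ ≠ 0)
    (hU : ∀ b, U b = (Fintype.card B : ℝ)⁻¹) :
    Fintype.card B ^ ℓ * Real.exp (-(ℓ * relEnt (fun b => (c b : ℝ) / ℓ) U))
      ≤ (ℓ + 1) ^ Fintype.card B * #(typeClass ℓ c) := by
  have h := one_le_card_typeClass_mul_prod_pow hc hℓ
  rw [Real.exp_neg, ← div_eq_mul_inv, div_le_iff₀ (Real.exp_pos _),
    ← card_pow_mul_prod_pow_eq_exp_relEnt hc hℓ hU]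
  calc (Fintype.card B : ℝ) ^ ℓ = Fintype.card B ^ ℓ * 1 := (mul_one _).symm
    _ ≤ Fintype.card B ^ ℓ * ((ℓ + 1 : ℝ) ^ Fintype.card B
        * (#(typeClass ℓ c) * ∏ b, ((c b : ℝ) / ℓ) ^ c b)) := by gcongr
    _ = _ := by ring

lemma card_le_of_le_relEnt_empPMF (hℓ : ℓ ≠ 0) (hU : ∀ b, U b = (Fintype.card B : ℝ)⁻¹)
    {s : Finset (Fin ℓ → B)} {D : ℝ} (hs : ∀ z ∈ s, D ≤ relEnt (empPMF ℓ z) U) :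
    (#s : ℝ) ≤ (ℓ + 1) ^ Fintype.card B * (Fintype.card B ^ ℓ * Real.exp (-(ℓ * D))) :=
  calc (#s : ℝ) = ∑ c ∈ s.image counts, (#{z ∈ s | counts z = c} : ℝ) := by
        exact_mod_cast card_eq_sum_card_image counts s
    _ ≤ ∑ _c ∈ s.image counts, (Fintype.card B ^ ℓ * Real.exp (-(ℓ * D)) : ℝ) :=
        sum_le_sum fun c hc => by
          obtain ⟨z, hz, rfl⟩ := mem_image.mp hc
          calc (#{z' ∈ s | counts z' = counts z} : ℝ) ≤ #(typeClass ℓ (counts z)) := by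
                exact_mod_cast card_le_card (filter_subset_filter _ (subset_univ s))
            _ ≤ _ := card_typeClass_le (sum_counts z) hℓ hU
            _ ≤ _ := by gcongr; exact hs z hz
    _ ≤ _ := by
        rw [sum_const, nsmul_eq_mul]
        gcongr
        exact_mod_cast card_image_counts_le s

lemma card_pow_mul_exp_neg_le_card_empPMF_mem (hℓ : ℓ ≠ 0)
    (hU : ∀ b, U b = (Fintype.card B : ℝ)⁻¹) {E : Set (B → ℝ)} {W : B → ℝ} (hWE : W ∈ E)
    (hW : ∀ b, ∃ j : ℕ, W b = (j : ℝ) / ℓ) (hW1 : ∑ b, W b = 1) {D : ℝ}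
    (hWD : relEnt W U ≤ D) :
    Fintype.card B ^ ℓ * Real.exp (-(ℓ * D))
      ≤ (ℓ + 1) ^ Fintype.card B * #{z : Fin ℓ → B | empPMF ℓ z ∈ E} := by
  choose c hc using hW
  obtain rfl : W = fun b => (c b : ℝ) / ℓ := funext hc
  have hsum : ∑ b, c b = ℓ := by
    rw [← sum_div, div_eq_one_iff_eq (Nat.cast_ne_zero.mpr hℓ)] at hW1
    exact_mod_cast hW1
  calc (Fintype.card B : ℝ) ^ ℓ * Real.exp (-(ℓ * D))
      ≤ Fintype.card B ^ ℓ * Real.exp (-(ℓ * relEnt (fun b => (c b : ℝ) / ℓ) U)) := by gcongr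
    _ ≤ (ℓ + 1) ^ Fintype.card B * #(typeClass ℓ c) :=
        card_pow_mul_exp_neg_relEnt_le_card_typeClass hsum hℓ hU
    _ ≤ (ℓ + 1) ^ Fintype.card B * #{z : Fin ℓ → B | empPMF ℓ z ∈ E} := by
        gcongr
        intro z hz
        rwa [mem_filter, empPMF_eq, mem_typeClass.mp hz, and_iff_right (mem_univ z)]

end MethodOfTypes

open MethodOfTypes

theorem conditional_divergence_tail_bound_general {A : Type*} [Fintype A] [Nonempty A]
    (k ℓ : ℕ) (hℓ : 0 < ℓ)
    (E : Set ((Fin k → A) → ℝ)) (D₀ δ : ℝ)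
    (U : (Fin k → A) → ℝ) (hU : ∀ y, U y = ((Fintype.card A : ℝ) ^ k)⁻¹)
    (W₀ : (Fin k → A) → ℝ) (hW₀E : W₀ ∈ E)
    (hW₀type : ∀ w, ∃ j : ℕ, W₀ w = (j : ℝ) / ℓ)
    (hW₀1 : (∑ w, W₀ w) = 1)
    (hW₀D : relEnt W₀ U ≤ D₀ + δ) :
    ((Finset.univ.filter (fun z : Fin ℓ → (Fin k → A) =>
        empPMF ℓ z ∈ E ∧ D₀ + 2 * δ < relEnt (empPMF ℓ z) U)).card : ℝ)
      / ((Finset.univ.filter (fun z : Fin ℓ → (Fin k → A) =>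
        empPMF ℓ z ∈ E)).card : ℝ)
      ≤ (ℓ + 1 : ℝ) ^ (2 * Fintype.card A ^ k) * Real.exp (-(ℓ : ℝ) * δ) := by
  have hU' : ∀ y, U y = (Fintype.card (Fin k → A) : ℝ)⁻¹ := by
    simpa [Fintype.card_fun] using hU
  have hden := card_pow_mul_exp_neg_le_card_empPMF_mem hℓ.ne' hU' hW₀E hW₀type hW₀1 hW₀D
  set M := Fintype.card (Fin k → A) with hM
  set good := univ.filter fun z : Fin ℓ → (Fin k → A) => empPMF ℓ z ∈ E
  have hgood : (0 : ℝ) < #good :=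
    pos_of_mul_pos_right ((by positivity : (0 : ℝ) < _).trans_le hden) (by positivity)
  rw [div_le_iff₀ hgood]
  calc _ ≤ (ℓ + 1 : ℝ) ^ M * (M ^ ℓ * Real.exp (-(ℓ * (D₀ + 2 * δ)))) :=
        card_le_of_le_relEnt_empPMF hℓ.ne' hU' fun z hz => (mem_filter.mp hz).2.2.le
    _ = (ℓ + 1 : ℝ) ^ M * (M ^ ℓ * Real.exp (-(ℓ * (D₀ + δ)))) * Real.exp (-(ℓ : ℝ) * δ) := by
        rw [mul_assoc, mul_assoc, ← Real.exp_add]; ring_nf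
    _ ≤ (ℓ + 1 : ℝ) ^ M * ((ℓ + 1) ^ M * #good) * Real.exp (-(ℓ : ℝ) * δ) := by gcongr
    _ = _ := by rw [hM, Fintype.card_fun, Fintype.card_fin]; ring

/-- for `Z_1,…,Z_ℓ` i.i.d. uniform on `A^k` and any set `E` of
distributions on `A^k` containing an `ℓ`-type `W₀` with `D(W₀‖U_k) ≤ D₀ + δ`,
the conditional probability that `D(P̂_{Z_1^ℓ}‖U_k) > D₀ + 2δ` given
`P̂_{Z_1^ℓ} ∈ E` is at most `(ℓ+1)^{2m^k} e^{−ℓδ}`. Probabilities under the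
uniform law on `(A^k)^ℓ` are ratios of cardinalities. -/
theorem conditional_divergence_tail_bound {A : Type*} [Fintype A] [Nonempty A]
    (k ℓ : ℕ) (hℓ : 0 < ℓ)
    (E : Set ((Fin k → A) → ℝ)) (D₀ δ : ℝ) (hδ : 0 < δ)
    (U : (Fin k → A) → ℝ) (hU : ∀ y, U y = ((Fintype.card A : ℝ) ^ k)⁻¹)
    (W₀ : (Fin k → A) → ℝ) (hW₀E : W₀ ∈ E)
    (hW₀type : ∀ w, ∃ j : ℕ, W₀ w = (j : ℝ) / ℓ)
    (hW₀0 : ∀ w, 0 ≤ W₀ w) (hW₀1 : (∑ w, W₀ w) = 1)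
    (hW₀D : relEnt W₀ U ≤ D₀ + δ) :
    ((Finset.univ.filter (fun z : Fin ℓ → (Fin k → A) =>
        empPMF ℓ z ∈ E ∧ D₀ + 2 * δ < relEnt (empPMF ℓ z) U)).card : ℝ)
      / ((Finset.univ.filter (fun z : Fin ℓ → (Fin k → A) =>
        empPMF ℓ z ∈ E)).card : ℝ)
      ≤ (ℓ + 1 : ℝ) ^ (2 * Fintype.card A ^ k) * Real.exp (-(ℓ : ℝ) * δ) :=
  conditional_divergence_tail_bound_general k ℓ hℓ E D₀ δ U hU W₀ hW₀E hW₀type hW₀1 hW₀D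
end

section
/- If (X_1,...,X_n) is exchangeable over finite A, n = kℓ, then for every a_1^k ∈ A^k, P(X_1^k = a_1^k) = ∫ E[P̂_{Z_1^ℓ}(a_1^k) | P̂_{Z_1^ℓ} ∈ E_k(Q)] dμ(Q), where Z_1,...,Z_ℓ are i.i.d. uniform on A^k, μ is the law of P̂_{X_1^n}, and E_k(Q) is the set of PMFs on A^k whose marginals average to Q. -/
/-!
Exchangeability makes `p` constant on type classes, so averaging the indicator of an event over
the type class of `x` and then over `x` reproduces its probability. Cutting a string of length
`k * ℓ` into `ℓ` blocks of length `k` is a bijection onto `(A^k)^ℓ` under which "same type as `x`"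
becomes "the block-empirical PMF has average marginal `P̂_x`". That condition is invariant under
permuting the blocks, so the average frequency of the block `a` over such strings is the fraction
of them whose first block is `a`.
-/

open scoped Classical BigOperators

/-- The `j`-th one-dimensional marginal of a distribution `W` on `A^k`. -/
noncomputable def marginal {A : Type*} [Fintype A] (k : ℕ) (W : (Fin k → A) → ℝ)
    (j : Fin k) (a : A) : ℝ :=
  ∑ y : Fin k → A, if y j = a then W y else 0

open Finset

section Averaging

variable {X τ : Type*} [Fintype X]

theorem sum_ite_eq_sum_mul_fiber_ratio (T : X → τ) (p : X → ℝ)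
    (hp : ∀ ⦃x y⦄, T x = T y → p x = p y) (P : X → Prop) [DecidablePred P] :
    ∑ x, (if P x then p x else 0)
      = ∑ x, p x * ((#{y | T y = T x ∧ P y} : ℝ) / #{y | T y = T x}) := by
  have hfiber : ∀ y, ∑ x, (if T x = T y then p x / #{x' | T x' = T x} else 0) = p y := by
    intro y
    have hcard : (#{x' | T x' = T y} : ℝ) ≠ 0 := by
      exact_mod_cast (card_pos.2 ⟨y, by simp⟩).ne'
    calc ∑ x, (if T x = T y then p x / #{x' | T x' = T x} else 0)
        = ∑ x, (if T x = T y then p y / #{x' | T x' = T y} else 0) := by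
          refine sum_congr rfl fun x _ => ?_
          split_ifs with h
          · rw [hp h, h]
          · rfl
      _ = p y := by
          rw [← sum_filter, sum_const, nsmul_eq_mul, mul_div_cancel₀ _ hcard]
  calc ∑ x, (if P x then p x else 0)
      = ∑ y, ∑ x, (if P y ∧ T x = T y then p x / #{x' | T x' = T x} else 0) := by
        refine sum_congr rfl fun y _ => ?_
        by_cases hy : P y <;> simp [hy, hfiber]
    _ = ∑ x, ∑ y, (if T y = T x ∧ P y then p x / #{x' | T x' = T x} else 0) := by
        rw [sum_comm]
        refine sum_congr rfl fun x _ => sum_congr rfl fun y _ => ?_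
        simp only [eq_comm, and_comm]
    _ = _ := by
        refine sum_congr rfl fun x _ => ?_
        rw [← sum_filter, sum_const, nsmul_eq_mul]
        ring

end Averaging

theorem card_filter_univ_comp_equiv {α β : Type*} [Fintype α] [Fintype β] (e : α ≃ β)
    (Q : β → Prop) [DecidablePred Q] : #{a | Q (e a)} = #{b | Q b} := by
  simp only [card_filter]
  exact e.sum_comp fun b => if Q b then 1 else 0

section EmpiricalPMF

variable {B : Type*} [Fintype B] {n : ℕ}

theorem empPMF_comp_perm (x : Fin n → B) (σ : Equiv.Perm (Fin n)) :
    empPMF n (x ∘ σ) = empPMF n x := by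
  funext w
  simp only [empPMF, ← Fintype.card_subtype]
  congr 2
  exact Fintype.card_congr (σ.subtypeEquiv fun t => by simp)

theorem exists_perm_of_empPMF_eq {x y : Fin n → B} (h : empPMF n x = empPMF n y) :
    ∃ σ : Equiv.Perm (Fin n), y ∘ σ = x := by
  have hcard : ∀ w, Fintype.card {t // x t = w} = Fintype.card {t // y t = w} := by
    intro w
    rcases Nat.eq_zero_or_pos n with rfl | hn
    · simp
    · have hw := congrFun h w
      simp only [empPMF, ← Fintype.card_subtype] at hw
      exact_mod_cast (div_left_inj' (by positivity : (n : ℝ) ≠ 0)).1 hw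
  let e w : {t // x t = w} ≃ {t // y t = w} := Fintype.equivOfCardEq (hcard w)
  refine ⟨(Equiv.sigmaFiberEquiv x).symm.trans
    ((Equiv.sigmaCongrRight e).trans (Equiv.sigmaFiberEquiv y)), funext fun t => ?_⟩
  exact (e (x t) ⟨t, rfl⟩).2

theorem apply_eq_of_empPMF_eq {β : Type*} {p : (Fin n → B) → β}
    (hp : ∀ (σ : Equiv.Perm (Fin n)) x, p (x ∘ σ) = p x) ⦃x y : Fin n → B⦄
    (h : empPMF n x = empPMF n y) : p x = p y := by
  obtain ⟨σ, rfl⟩ := exists_perm_of_empPMF_eq h.symm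
  exact (hp σ x).symm

theorem sum_empPMF_eq_card_filter {ℓ : ℕ} (S : Finset (Fin ℓ → B))
    (hS : ∀ σ : Equiv.Perm (Fin ℓ), ∀ z ∈ S, z ∘ σ ∈ S) (t₀ : Fin ℓ) (w : B) :
    ∑ z ∈ S, empPMF ℓ z w = #{z ∈ S | z t₀ = w} := by
  have hcoord : ∀ t, #{z ∈ S | z t = w} = #{z ∈ S | z t₀ = w} := by
    intro t
    refine card_nbij' (· ∘ Equiv.swap t₀ t) (· ∘ Equiv.swap t₀ t) ?_ ?_ ?_ ?_
    iterate 2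
      intro z hz
      simp only [coe_filter] at hz ⊢
      exact ⟨hS _ z hz.1, by simpa using hz.2⟩
    all_goals intro z _; funext s; simp
  have hℓ : (ℓ : ℝ) ≠ 0 := by
    have : 0 < ℓ := Fin.pos t₀
    positivity
  calc ∑ z ∈ S, empPMF ℓ z w
      = (∑ t : Fin ℓ, (#{z ∈ S | z t = w} : ℝ)) / ℓ := by
        simp only [empPMF, ← sum_div, card_filter]
        push_cast
        rw [sum_comm]
    _ = #{z ∈ S | z t₀ = w} := by
        simp only [hcoord, sum_const, card_univ, Fintype.card_fin, nsmul_eq_mul]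
        field_simp

end EmpiricalPMF

section Blocks

variable {A : Type*} {k ℓ : ℕ}

def blockIndex (k ℓ : ℕ) : Fin ℓ × Fin k ≃ Fin (k * ℓ) :=
  finProdFinEquiv.trans (finCongr (mul_comm ℓ k))

def concatBlocks (k ℓ : ℕ) : (Fin ℓ → Fin k → A) ≃ (Fin (k * ℓ) → A) :=
  (Equiv.curry (Fin ℓ) (Fin k) A).symm.trans (Equiv.arrowCongr (blockIndex k ℓ) (Equiv.refl A))

@[simp]
theorem concatBlocks_apply_blockIndex (z : Fin ℓ → Fin k → A) (t : Fin ℓ) (j : Fin k) :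
    concatBlocks k ℓ z (blockIndex k ℓ (t, j)) = z t j := by
  simp [concatBlocks]

theorem concatBlocks_castLE (hℓ : 0 < ℓ) (hkl : k ≤ k * ℓ) (z : Fin ℓ → Fin k → A) (i : Fin k) :
    concatBlocks k ℓ z (Fin.castLE hkl i) = z ⟨0, hℓ⟩ i := by
  have hfirst : blockIndex k ℓ (⟨0, hℓ⟩, i) = Fin.castLE hkl i := by
    ext
    simp [blockIndex, finProdFinEquiv]
  rw [← hfirst, concatBlocks_apply_blockIndex]

theorem marginal_empPMF [Fintype A] (z : Fin ℓ → Fin k → A) (j : Fin k) (b : A) :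
    marginal k (empPMF ℓ z) j b = empPMF ℓ (fun t => z t j) b := by
  have hfiber : #{t | z t j = b} = ∑ y : Fin k → A with y j = b, #{t | z t = y} := by
    rw [card_eq_sum_card_fiberwise (f := z) (t := {y | y j = b}) (fun t ht => by simpa using ht)]
    refine sum_congr rfl fun y hy => ?_
    rw [filter_filter, mem_filter] at *
    refine congrArg card (filter_congr fun t _ => ?_)
    constructor
    · exact fun h => h.2
    · rintro rfl; exact ⟨hy.2, rfl⟩
  simp only [marginal, empPMF, hfiber, Nat.cast_sum, sum_div, sum_filter]
  refine sum_congr rfl fun y _ => ?_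
  split_ifs
  · congr -- the two filters differ only in their `Decidable` instances
  · simp

theorem sum_marginal_empPMF_div [Fintype A] (z : Fin ℓ → Fin k → A) (b : A) :
    (∑ j, marginal k (empPMF ℓ z) j b) / k = empPMF (k * ℓ) (concatBlocks k ℓ z) b := by
  have hcount : (#{m | concatBlocks k ℓ z m = b} : ℝ) = ∑ j, (#{t | z t j = b} : ℝ) := by
    simp only [card_filter]
    push_cast
    rw [← (blockIndex k ℓ).sum_comp, Fintype.sum_prod_type, sum_comm]
    simp
  simp only [marginal_empPMF, empPMF, ← sum_div, hcount, div_div, Nat.cast_mul, mul_comm]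

theorem empPMF_concatBlocks_comp_perm [Fintype A] (z : Fin ℓ → Fin k → A)
    (σ : Equiv.Perm (Fin ℓ)) :
    empPMF (k * ℓ) (concatBlocks k ℓ (z ∘ σ)) = empPMF (k * ℓ) (concatBlocks k ℓ z) :=
  funext fun b => by simp only [← sum_marginal_empPMF_div, empPMF_comp_perm]

end Blocks

theorem exchangeable_first_block_mixture_identity_general {A : Type*} [Fintype A]
    (k ℓ : ℕ) (hℓ : 1 ≤ ℓ) (hkl : k ≤ k * ℓ)
    (p : (Fin (k * ℓ) → A) → ℝ)
    (hexch : ∀ (π : Equiv.Perm (Fin (k * ℓ))) (x : Fin (k * ℓ) → A), p (x ∘ π) = p x)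
    (a : Fin k → A) :
    (∑ x, if (∀ i : Fin k, x (Fin.castLE hkl i) = a i) then p x else 0)
      = ∑ x, p x *
          ((∑ z : Fin ℓ → (Fin k → A),
              if (∀ b : A, (∑ j : Fin k, marginal k (empPMF ℓ z) j b) / k
                    = empPMF (k * ℓ) x b)
              then empPMF ℓ z a else 0)
            / ((Finset.univ.filter (fun z : Fin ℓ → (Fin k → A) =>
                ∀ b : A, (∑ j : Fin k, marginal k (empPMF ℓ z) j b) / k
                  = empPMF (k * ℓ) x b)).card : ℝ)) := by
  set F := concatBlocks (A := A) k ℓ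
  set t₀ : Fin ℓ := ⟨0, hℓ⟩
  have hcond : ∀ z x, (∀ b, (∑ j, marginal k (empPMF ℓ z) j b) / k = empPMF (k * ℓ) x b)
      ↔ empPMF (k * ℓ) (F z) = empPMF (k * ℓ) x := by
    intro z x
    simp only [sum_marginal_empPMF_div, funext_iff, F]
  have hfirst : ∀ z, (∀ i, F z (Fin.castLE hkl i) = a i) ↔ z t₀ = a := fun z => by
    simp only [F, concatBlocks_castLE hℓ hkl, funext_iff, t₀]
  rw [sum_ite_eq_sum_mul_fiber_ratio (empPMF (k * ℓ)) p (apply_eq_of_empPMF_eq hexch)]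
  refine sum_congr rfl fun x _ => ?_
  simp only [hcond, ← sum_filter]
  rw [sum_empPMF_eq_card_filter _
    (fun σ z hz => by simpa [F, empPMF_concatBlocks_comp_perm] using hz) t₀, filter_filter]
  -- as in `marginal_empPMF`, the filters on both sides carry different `Decidable` instances
  congr 3
  · rw [← card_filter_univ_comp_equiv F]
    simp only [hfirst]
    congr
  · convert (card_filter_univ_comp_equiv F _).symm

/-- for exchangeable `(X_1,…,X_n)` with `n = kℓ`,
`P(X_1^k = a_1^k) = ∫ E[P̂_{Z_1^ℓ}(a_1^k) | P̂_{Z_1^ℓ} ∈ E_k(Q)] dμ(Q)`,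
where `Z_1,…,Z_ℓ` are i.i.d. uniform on `A^k`, `μ` is the law of `P̂_{X_1^n}`,
and `E_k(Q)` is the set of PMFs on `A^k` whose marginals average to `Q`. The
integral over `μ` is the expectation over `Q = P̂_{X_1^n}`, and conditional
expectations under the uniform law are ratios of sums over `(A^k)^ℓ`. -/
theorem exchangeable_first_block_mixture_identity {A : Type*} [Fintype A]
    (k ℓ : ℕ) (hk : 1 ≤ k) (hℓ : 1 ≤ ℓ) (hkl : k ≤ k * ℓ)
    (p : (Fin (k * ℓ) → A) → ℝ) (hp0 : ∀ x, 0 ≤ p x) (hp1 : (∑ x, p x) = 1)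
    (hexch : ∀ (π : Equiv.Perm (Fin (k * ℓ))) (x : Fin (k * ℓ) → A), p (x ∘ π) = p x)
    (a : Fin k → A) :
    (∑ x, if (∀ i : Fin k, x (Fin.castLE hkl i) = a i) then p x else 0)
      = ∑ x, p x *
          ((∑ z : Fin ℓ → (Fin k → A),
              if (∀ b : A, (∑ j : Fin k, marginal k (empPMF ℓ z) j b) / k
                    = empPMF (k * ℓ) x b)
              then empPMF ℓ z a else 0)
            / ((Finset.univ.filter (fun z : Fin ℓ → (Fin k → A) =>
                ∀ b : A, (∑ j : Fin k, marginal k (empPMF ℓ z) j b) / k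
                  = empPMF (k * ℓ) x b)).card : ℝ)) :=
  exchangeable_first_block_mixture_identity_general k ℓ hℓ hkl p hexch a
end
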